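/- Assume ran(Ṽ) is closed and let n ≥ 1. Then: (1) ker(Ṽ†^(n)) is contained in the closed linear span of ⋃_{i=0}^{n−1} Ṽ_i(H_i(W)); (2) if moreover the representation is regular, then ker(Ṽ_n) equals the closed linear span of ⋃_{i=0}^{n−1} (I_{E^{⊗(n−i)}} ⊗ Ṽ†^(i))(E^{⊗(n−i−1)} ⊙ W†), where for a subspace K ⊆ H_1 and j ≥ 0, E^{⊗j} ⊙ K := {ξ ∈ H_{j+1} : for every word α with |α| = j the block (ξ_{αi})_{1≤i≤d} lies in K}. -/

import Mathlib

open scoped InnerProductSpace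

noncomputable section

variable (H : Type) [NormedAddCommGroup H] [InnerProductSpace ℂ H]

/-- Words of length `n` in the alphabet `{1,…,d}`. -/
abbrev Word (d n : ℕ) := Fin n → Fin d

/-- `H_n`: the ℓ²-direct sum of copies of `H` indexed by words of length `n`. -/
abbrev Hn (d n : ℕ) := PiLp 2 (fun _ : Word d n => H)

instance instHnCompleteSpace [CompleteSpace H] (d n : ℕ) : CompleteSpace (Hn H d n) :=
  ((PiLp.continuousLinearEquiv 2 ℂ (fun _ : Word d n => H)).isUniformEmbedding.completeSpace_congr
    (PiLp.continuousLinearEquiv 2 ℂ (fun _ : Word d n => H)).surjective).mpr inferInstance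

/-- The coordinate projection `H_m → H` at the word `α`. -/
def coord (d m : ℕ) (α : Word d m) : Hn H d m →L[ℂ] H :=
  PiLp.proj 2 (fun _ : Word d m => H) α

/-- The embedding `H → H_n` into the coordinate at the word `α`. -/
def singleCLM (d n : ℕ) (α : Word d n) : H →L[ℂ] Hn H d n :=
  ((PiLp.continuousLinearEquiv 2 ℂ (fun _ : Word d n => H)).symm.toContinuousLinearMap).comp
    (ContinuousLinearMap.pi (fun β : Word d n =>
      if β = α then ContinuousLinearMap.id ℂ H else 0))

/-- `V_α := V_{α_1} ∘ ⋯ ∘ V_{α_n}` for a word `α`. -/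
def Vword {d : ℕ} (V : Fin d → H →L[ℂ] H) : (n : ℕ) → Word d n → (H →L[ℂ] H)
  | 0, _ => ContinuousLinearMap.id ℂ H
  | (n + 1), α => (V (α 0)).comp (Vword V n (fun i => α i.succ))

/-- `Ṽ_n : H_n → H`, `Ṽ_n((h_α)_α) = Σ_α V_α h_α`. -/
def Vtilde {d : ℕ} (V : Fin d → H →L[ℂ] H) (n : ℕ) : Hn H d n →L[ℂ] H :=
  ∑ α : Word d n, (Vword H V n α).comp (coord H d n α)

/-- Extraction of the `α`-block: `H_{n+j} → H_j`. -/
def blockIn (d n j : ℕ) (α : Word d n) : Hn H d (n + j) →L[ℂ] Hn H d j :=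
  ((PiLp.continuousLinearEquiv 2 ℂ (fun _ : Word d j => H)).symm.toContinuousLinearMap).comp
    (ContinuousLinearMap.pi (fun γ : Word d j => coord H d (n + j) (Fin.append α γ)))

/-- Insertion of the `α`-block: `H_k → H_{n+k}`. -/
def blockOut (d n k : ℕ) (α : Word d n) : Hn H d k →L[ℂ] Hn H d (n + k) :=
  ((PiLp.continuousLinearEquiv 2 ℂ (fun _ : Word d (n + k) => H)).symm.toContinuousLinearMap).comp
    (ContinuousLinearMap.pi (fun β : Word d (n + k) =>
      if (fun i : Fin n => β (Fin.castAdd k i)) = α then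
        coord H d k (fun i : Fin k => β (Fin.natAdd n i)) else 0))

/-- The amplification `I_{E^{⊗n}} ⊗ R : H_{n+j} → H_n` of a map `R : H_j → H`. -/
def ampV (d n j : ℕ) (R : Hn H d j →L[ℂ] H) : Hn H d (n + j) →L[ℂ] Hn H d n :=
  ∑ α : Word d n, (singleCLM H d n α).comp (R.comp (blockIn H d n j α))

/-- The amplification `I_{E^{⊗n}} ⊗ S : H_n → H_{n+k}` of a map `S : H → H_k`. -/
def ampS (d n k : ℕ) (S : H →L[ℂ] Hn H d k) : Hn H d n →L[ℂ] Hn H d (n + k) :=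
  ∑ α : Word d n, (blockOut H d n k α).comp (S.comp (coord H d n α))

/-- The amplification `I_{E^{⊗n}} ⊗ T : H_n → H_n` of a map `T : H → H`. -/
def ampHH (d n : ℕ) (T : H →L[ℂ] H) : Hn H d n →L[ℂ] Hn H d n :=
  ∑ α : Word d n, (singleCLM H d n α).comp (T.comp (coord H d n α))

/-- The amplification `I_{E^{⊗n}} ⊗ R : H_{n+j} → H_{n+k}` of a map `R : H_j → H_k`. -/
def ampGen (d n j k : ℕ) (R : Hn H d j →L[ℂ] Hn H d k) :
    Hn H d (n + j) →L[ℂ] Hn H d (n + k) :=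
  ∑ α : Word d n, (blockOut H d n k α).comp (R.comp (blockIn H d n j α))

/-- The iterates `S^{(n)} : H → H_n` of a map `S : H → H_1`:
`S^{(0)} = I_H` and `S^{(n+1)} = (I_{E^{⊗n}} ⊗ S) ∘ S^{(n)}`. -/
def Siter {d : ℕ} (S : H →L[ℂ] Hn H d 1) : (n : ℕ) → (H →L[ℂ] Hn H d n)
  | 0 => singleCLM H d 0 (fun i => i.elim0)
  | (n + 1) => (ampS H d n 1 S).comp (Siter S n)

/-- The generalized range `R^∞(V) = ⋂_{n ≥ 1} ran Ṽ_n`. -/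
def Rinf {d : ℕ} (V : Fin d → H →L[ℂ] H) : Submodule ℂ H :=
  ⨅ (n : ℕ) (_ : 1 ≤ n), LinearMap.range (Vtilde H V n).toLinearMap

/-- `H_n(K)`: families all of whose entries lie in `K` (realizing `E^{⊗n} ⊗ K`). -/
def HnSub (d n : ℕ) (K : Submodule ℂ H) : Submodule ℂ (Hn H d n) :=
  ⨅ α : Word d n, K.comap (coord H d n α).toLinearMap

/-- The representation is regular: `ran Ṽ` is closed and
`ker Ṽ_n ⊆ ran (I_{E^{⊗n}} ⊗ Ṽ_m)` for all `n, m ≥ 1`. -/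
def RepRegular {d : ℕ} (V : Fin d → H →L[ℂ] H) : Prop :=
  IsClosed (LinearMap.range (Vtilde H V 1).toLinearMap : Set H) ∧
    ∀ n m : ℕ, 1 ≤ n → 1 ≤ m →
      LinearMap.ker (Vtilde H V n).toLinearMap ≤ LinearMap.range (ampV H d n m (Vtilde H V m)).toLinearMap

/-- The reduced minimum modulus `γ(T)`. -/
def rmm {X Y : Type*} [NormedAddCommGroup X] [InnerProductSpace ℂ X]
    [NormedAddCommGroup Y] [InnerProductSpace ℂ Y] (T : X →L[ℂ] Y) : ℝ :=
  sInf ((fun ξ => ‖T ξ‖ / Metric.infDist ξ (LinearMap.ker T.toLinearMap : Set X)) ''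
    {ξ : X | ξ ∉ LinearMap.ker T.toLinearMap})

/-- The cast `H_m → H_k` along an equality `m = k` of word lengths. -/
def castHn (d : ℕ) {m k : ℕ} (h : m = k) : Hn H d m →L[ℂ] Hn H d k := by
  subst h; exact ContinuousLinearMap.id ℂ _

/-- `E^{⊗j} ⊙ K ⊆ H_{j+1}`: families all of whose `1`-blocks lie in `K ⊆ H_1`. -/
def odotSub (d j : ℕ) (K : Submodule ℂ (Hn H d 1)) : Submodule ℂ (Hn H d (j + 1)) :=
  ⨅ α : Word d j, K.comap (blockIn H d j 1 α).toLinearMap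

end


/-!
Write `Q = ṼṼ†`; the first and third Moore–Penrose identities make it the orthogonal projection
onto `ran Ṽ`. Since `Ṽ_{i+1} Ṽ†^{(i+1)} = Ṽ_i (I ⊗ Q) Ṽ†^{(i)}`, the sum
`Σ_{i<n} Ṽ_i (I ⊗ (1 - Q)) Ṽ†^{(i)} h` telescopes to `h - Ṽ_n Ṽ†^{(n)} h`, and `1 - Q` maps `H`
into `W`. So a vector killed by `Ṽ†^{(n)}` already lies in the span, before taking closures.

For `x ∈ ker Ṽ_{n+1}` write `x = (x - (I ⊗ Ṽ†Ṽ) x) + (I_n ⊗ Ṽ†) (I_n ⊗ Ṽ) x`. The first summand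
has all its `1`-blocks in `W†`, which makes it the generator with `i = 0`; the vector
`(I_n ⊗ Ṽ) x` lies in `ker Ṽ_n`, spanned by the generators for `n` by induction, and `I_n ⊗ Ṽ†`
maps the generators for `n` to generators for `n + 1`. Conversely, regularity makes `Ṽ_i Ṽ†^{(i)}`
the identity on `ran Ṽ_i` (by induction on `i`, since `Q` fixes `ran Ṽ`) and puts every entry of
a vector of `W†` in `ran Ṽ_i`. Hence `Ṽ_n` kills every generator, and `ker Ṽ_n` is closed.
-/

lemma PiLp.sum_apply {p : ENNReal} {ι κ : Type*} {β : κ → Type*} [∀ k, AddCommGroup (β k)]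
    (s : Finset ι) (f : ι → PiLp p β) (k : κ) :
    (∑ i ∈ s, f i) k = ∑ i ∈ s, f i k := by
  rw [WithLp.ofLp_sum, Finset.sum_apply]

section Coordinates

variable {H : Type} [NormedAddCommGroup H] [InnerProductSpace ℂ H] {d : ℕ}

@[simp]
lemma coord_apply (m : ℕ) (α : Word d m) (x : Hn H d m) : coord H d m α x = x α := rfl

@[simp]
lemma blockIn_apply (n j : ℕ) (α : Word d n) (x : Hn H d (n + j)) (γ : Word d j) :
    blockIn H d n j α x γ = x (Fin.append α γ) := rfl

lemma castHn_apply {m k : ℕ} (h : m = k) (x : Hn H d m) (β : Word d k) :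
    castHn H d h x β = x (fun i => β (Fin.cast h i)) := by
  subst h; rfl

lemma singleCLM_apply (n : ℕ) (α β : Word d n) (h : H) :
    singleCLM H d n α h β = if β = α then h else 0 := by
  by_cases hβ : β = α <;> simp [singleCLM, hβ]

lemma blockOut_apply (n k : ℕ) (α : Word d n) (y : Hn H d k) (β : Word d (n + k)) :
    blockOut H d n k α y β =
      if (fun i => β (Fin.castAdd k i)) = α then y (fun i => β (Fin.natAdd n i)) else 0 := by
  by_cases hβ : (fun i => β (Fin.castAdd k i)) = α <;>
    simp [blockOut, hβ]

lemma ampS_apply (n k : ℕ) (S : H →L[ℂ] Hn H d k) (x : Hn H d n) (β : Word d (n + k)) :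
    ampS H d n k S x β = S (x (fun i => β (Fin.castAdd k i))) (fun i => β (Fin.natAdd n i)) := by
  simp only [ampS, sum_apply, ContinuousLinearMap.comp_apply, PiLp.sum_apply,
    blockOut_apply, coord_apply, Finset.sum_ite_eq, Finset.mem_univ, if_true]

lemma ampV_apply (n j : ℕ) (R : Hn H d j →L[ℂ] H) (x : Hn H d (n + j)) (α : Word d n) :
    ampV H d n j R x α = R (blockIn H d n j α x) := by
  simp only [ampV, sum_apply, ContinuousLinearMap.comp_apply, PiLp.sum_apply,
    singleCLM_apply, Finset.sum_ite_eq, Finset.mem_univ, if_true]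

lemma ampHH_apply (n : ℕ) (T : H →L[ℂ] H) (x : Hn H d n) (α : Word d n) :
    ampHH H d n T x α = T (x α) := by
  simp only [ampHH, sum_apply, ContinuousLinearMap.comp_apply, PiLp.sum_apply,
    singleCLM_apply, coord_apply, Finset.sum_ite_eq, Finset.mem_univ, if_true]

lemma blockIn_ampS (n k : ℕ) (S : H →L[ℂ] Hn H d k) (x : Hn H d n) (α : Word d n) :
    blockIn H d n k α (ampS H d n k S x) = S (x α) := by
  ext γ
  simp [ampS_apply]

lemma mem_HnSub {n : ℕ} {K : Submodule ℂ H} {x : Hn H d n} :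
    x ∈ HnSub H d n K ↔ ∀ α, x α ∈ K := by
  simp [HnSub]

lemma mem_odotSub {n : ℕ} {K : Submodule ℂ (Hn H d 1)} {ξ : Hn H d (n + 1)} :
    ξ ∈ odotSub H d n K ↔ ∀ α, blockIn H d n 1 α ξ ∈ K := by
  simp [odotSub]

end Coordinates

section Words

variable {H : Type} [NormedAddCommGroup H] [InnerProductSpace ℂ H] {d : ℕ}
  (V : Fin d → H →L[ℂ] H)

lemma Vword_cons (n : ℕ) (a : Fin d) (α : Word d n) :
    Vword H V (n + 1) (Fin.cons a α) = (V a).comp (Vword H V n α) := by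
  simp [Vword]

lemma Vword_snoc (n : ℕ) (α : Word d n) (a : Fin d) :
    Vword H V (n + 1) (Fin.snoc α a) = (Vword H V n α).comp (V a) := by
  induction n with
  | zero => simp [Vword, Fin.snoc_zero]
  | succ n ih =>
    obtain ⟨b, β, rfl⟩ : ∃ b β, α = Fin.cons b β :=
      ⟨α 0, Fin.tail α, (Fin.cons_self_tail α).symm⟩
    rw [← Fin.cons_snoc_eq_snoc_cons, Vword_cons, Vword_cons, ih, ContinuousLinearMap.comp_assoc]

lemma Vword_append (n k : ℕ) (α : Word d n) (γ : Word d k) :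
    Vword H V (n + k) (Fin.append α γ) = (Vword H V n α).comp (Vword H V k γ) := by
  induction k with
  | zero => simp [Vword, Fin.append_right_nil]
  | succ k ih =>
    rw [← Fin.snoc_init_self γ, Fin.append_snoc]
    exact (Vword_snoc V (n + k) _ _).trans (by rw [ih, Vword_snoc, ContinuousLinearMap.comp_assoc])

lemma sum_word_add {M : Type*} [AddCommMonoid M] (n k : ℕ) (f : Word d (n + k) → M) :
    ∑ β, f β = ∑ α : Word d n, ∑ γ : Word d k, f (Fin.append α γ) := by
  rw [← Fintype.sum_prod_type']
  exact (Fintype.sum_equiv (Fin.appendEquiv n k) _ f fun _ => rfl).symm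

lemma Vtilde_apply (n : ℕ) (x : Hn H d n) : Vtilde H V n x = ∑ α, Vword H V n α (x α) := by
  simp [Vtilde, sum_apply]

lemma Vtilde_zero_apply (x : Hn H d 0) (α : Word d 0) : Vtilde H V 0 x = x α := by
  rw [Vtilde_apply, Fintype.sum_unique, Subsingleton.elim default α]
  rfl

lemma Vtilde_castHn {m k : ℕ} (h : m = k) (x : Hn H d m) :
    Vtilde H V k (castHn H d h x) = Vtilde H V m x := by
  subst h; rfl

lemma Vtilde_comp_ampV (n k : ℕ) :
    (Vtilde H V n).comp (ampV H d n k (Vtilde H V k)) = Vtilde H V (n + k) := by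
  ext x
  simp only [ContinuousLinearMap.comp_apply, Vtilde_apply, ampV_apply, blockIn_apply, map_sum,
    sum_word_add n k, Vword_append]

end Words

section Amplification

variable {H : Type} [NormedAddCommGroup H] [InnerProductSpace ℂ H] {d : ℕ}

lemma ampV_comp_ampS (n j : ℕ) (R : Hn H d j →L[ℂ] H) (S : H →L[ℂ] Hn H d j) :
    (ampV H d n j R).comp (ampS H d n j S) = ampHH H d n (R.comp S) := by
  ext x α
  simp [ampV_apply, ampHH_apply, blockIn_ampS]

lemma ampS_comp_ampS (a i : ℕ) (S : H →L[ℂ] Hn H d 1) (T : H →L[ℂ] Hn H d i) :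
    (ampS H d (a + i) 1 S).comp (ampS H d a i T) =
      ampS H d a (i + 1) ((ampS H d i 1 S).comp T) := by
  ext x β
  have hβ (j : Fin 1) : β (Fin.natAdd (a + i) j) = β (Fin.natAdd a (Fin.natAdd i j)) :=
    congrArg β (Fin.ext (Nat.add_assoc a i j))
  simp only [ContinuousLinearMap.comp_apply, ampS_apply, hβ]
  rfl

lemma ampHH_id_sub_apply (n : ℕ) (T : H →L[ℂ] H) (x : Hn H d n) :
    ampHH H d n (ContinuousLinearMap.id ℂ H - T) x = x - ampHH H d n T x := by
  ext α
  simp [ampHH_apply]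

lemma ampHH_mem_HnSub (n : ℕ) {T : H →L[ℂ] H} {K : Submodule ℂ H} (hT : ∀ y, T y ∈ K)
    (x : Hn H d n) : ampHH H d n T x ∈ HnSub H d n K :=
  mem_HnSub.2 fun α => by rw [ampHH_apply]; exact hT _

lemma castHn_castHn {m k l : ℕ} (h : m = k) (h' : k = l) (x : Hn H d m) :
    castHn H d h' (castHn H d h x) = castHn H d (h.trans h') x := by
  subst h h'; rfl

lemma ampS_castHn {m m' : ℕ} (k : ℕ) (S : H →L[ℂ] Hn H d k) (h : m = m') (x : Hn H d m) :
    ampS H d m' k S (castHn H d h x) = castHn H d (congrArg (· + k) h) (ampS H d m k S x) := by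
  subst h; rfl

lemma castHn_mem_odotSub {a b : ℕ} (h : a + 1 = b + 1) {K : Submodule ℂ (Hn H d 1)}
    {ξ : Hn H d (a + 1)} (hξ : ξ ∈ odotSub H d a K) : castHn H d h ξ ∈ odotSub H d b K := by
  obtain rfl : a = b := by omega
  exact hξ

lemma Siter_zero_apply (S : H →L[ℂ] Hn H d 1) (h : H) (β : Word d 0) :
    Siter H S 0 h β = h := by
  simp [Siter, singleCLM_apply, Subsingleton.elim β (fun i => i.elim0)]

end Amplification

section MoorePenrose

variable {X Y : Type*} [NormedAddCommGroup X] [InnerProductSpace ℂ X]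
  [NormedAddCommGroup Y] [InnerProductSpace ℂ Y] {T : X →L[ℂ] Y} {S : Y →L[ℂ] X}

lemma apply_apply_of_mem_range (hTST : T.comp (S.comp T) = T) {y : Y}
    (hy : y ∈ LinearMap.range T.toLinearMap) : T (S y) = y := by
  obtain ⟨x, rfl⟩ := hy
  exact DFunLike.congr_fun hTST x

lemma sub_apply_mem_orthogonal_range [CompleteSpace Y] (hTST : T.comp (S.comp T) = T)
    (hTS : IsSelfAdjoint (T.comp S)) (y : Y) :
    y - T (S y) ∈ (LinearMap.range T.toLinearMap)ᗮ := by
  rw [Submodule.mem_orthogonal]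
  rintro _ ⟨x, rfl⟩
  have hsymm : ⟪T (S (T x)), y⟫_ℂ = ⟪T x, T (S y)⟫_ℂ := hTS.isSymmetric (T x) y
  rw [ContinuousLinearMap.coe_coe, inner_sub_right, ← hsymm,
    apply_apply_of_mem_range hTST (y := T x) ⟨x, rfl⟩, sub_self]

end MoorePenrose

section KernelOfSiter

variable {H : Type} [NormedAddCommGroup H] [InnerProductSpace ℂ H] {d : ℕ}
  {V : Fin d → H →L[ℂ] H} {S : H →L[ℂ] Hn H d 1}

lemma Vtilde_comp_Siter_succ (n : ℕ) :
    (Vtilde H V (n + 1)).comp (Siter H S (n + 1)) =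
      (Vtilde H V n).comp ((ampHH H d n ((Vtilde H V 1).comp S)).comp (Siter H S n)) := by
  rw [← Vtilde_comp_ampV, Siter, ← ampV_comp_ampS]
  rfl

lemma sum_Vtilde_ampHH_Siter_add_Vtilde_Siter (n : ℕ) (h : H) :
    ∑ i ∈ Finset.range n, Vtilde H V i
        (ampHH H d i (ContinuousLinearMap.id ℂ H - (Vtilde H V 1).comp S) (Siter H S i h)) +
      Vtilde H V n (Siter H S n h) = h := by
  have hstep (i : ℕ) : Vtilde H V i
      (ampHH H d i (ContinuousLinearMap.id ℂ H - (Vtilde H V 1).comp S) (Siter H S i h)) =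
        Vtilde H V i (Siter H S i h) - Vtilde H V (i + 1) (Siter H S (i + 1) h) := by
    rw [ampHH_id_sub_apply, map_sub, ← ContinuousLinearMap.comp_apply (Vtilde H V (i + 1)),
      Vtilde_comp_Siter_succ]
    rfl
  rw [Finset.sum_congr rfl fun i _ => hstep i, Finset.sum_range_sub', sub_add_cancel,
    Vtilde_zero_apply V _ (fun i => i.elim0), Siter_zero_apply]

lemma ker_Siter_le_iSup [CompleteSpace H]
    (hTST : (Vtilde H V 1).comp (S.comp (Vtilde H V 1)) = Vtilde H V 1)
    (hTS : IsSelfAdjoint ((Vtilde H V 1).comp S)) (n : ℕ) :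
    LinearMap.ker (Siter H S n).toLinearMap ≤
      ⨆ i ∈ Finset.range n, Submodule.map (Vtilde H V i).toLinearMap
        (HnSub H d i ((LinearMap.range (Vtilde H V 1).toLinearMap)ᗮ)) := by
  intro h (hh : Siter H S n h = 0)
  rw [← sum_Vtilde_ampHH_Siter_add_Vtilde_Siter (V := V) (S := S) n h, hh, map_zero, add_zero]
  have hW (y : H) : (ContinuousLinearMap.id ℂ H - (Vtilde H V 1).comp S) y ∈
      (LinearMap.range (Vtilde H V 1).toLinearMap)ᗮ :=
    sub_apply_mem_orthogonal_range hTST hTS y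
  exact Submodule.sum_mem _ fun i hi => Submodule.mem_iSup_of_mem i <|
    Submodule.mem_iSup_of_mem hi ⟨_, ampHH_mem_HnSub i hW _, rfl⟩

end KernelOfSiter

section KernelOfVtilde

variable {H : Type} [NormedAddCommGroup H] [InnerProductSpace ℂ H] {d : ℕ}

/-- The paper's `I_{E^{⊗(n-i)}} ⊗ Ṽ†^{(i)}` on `E^{⊗(n-i-1)} ⊙ W†`, with the word lengths
cast to `(n - i - 1) + 1` and `n`. -/
def ampSiter (S : H →L[ℂ] Hn H d 1) (n : ℕ) (i : Fin n) :
    Hn H d (n - i - 1 + 1) →L[ℂ] Hn H d n :=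
  (castHn H d (Nat.sub_add_cancel i.isLt.le)).comp
    ((ampS H d (n - i) i (Siter H S i)).comp
      (castHn H d (Nat.sub_one_add_one (Nat.sub_ne_zero_of_lt i.isLt))))

def kerSpan (V : Fin d → H →L[ℂ] H) (S : H →L[ℂ] Hn H d 1) (n : ℕ) :
    Submodule ℂ (Hn H d n) :=
  ⨆ i : Fin n, Submodule.map (ampSiter S n i).toLinearMap
    (odotSub H d (n - (i : ℕ) - 1) (LinearMap.ker (Vtilde H V 1).toLinearMap))

variable {V : Fin d → H →L[ℂ] H} {S : H →L[ℂ] Hn H d 1}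

lemma RepRegular.apply_mem_range_of_Vtilde_eq_zero (reg : RepRegular H V) {n : ℕ} (m : ℕ)
    {x : Hn H d n} (hx : Vtilde H V n x = 0) (α : Word d n) :
    x α ∈ LinearMap.range (Vtilde H V m).toLinearMap := by
  rcases Nat.eq_zero_or_pos n with rfl | hn
  · rw [← Vtilde_zero_apply V x α, hx]
    exact zero_mem _
  rcases Nat.eq_zero_or_pos m with rfl | hm
  · refine ⟨singleCLM H d 0 (fun i => i.elim0) (x α), ?_⟩
    simp [Vtilde_zero_apply V _ (fun i => i.elim0), singleCLM_apply]
  · obtain ⟨η, rfl⟩ := reg.2 n m hn hm hx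
    exact ⟨blockIn H d n m α η, (ampV_apply n m _ η α).symm⟩

lemma Vtilde_Siter_of_mem_range
    (hTST : (Vtilde H V 1).comp (S.comp (Vtilde H V 1)) = Vtilde H V 1)
    (reg : RepRegular H V) (i : ℕ) {y : H}
    (hy : y ∈ LinearMap.range (Vtilde H V i).toLinearMap) :
    Vtilde H V i (Siter H S i y) = y := by
  induction i generalizing y with
  | zero => rw [Vtilde_zero_apply V _ (fun i => i.elim0), Siter_zero_apply]
  | succ i ih =>
    obtain ⟨z, rfl⟩ := hy
    set u := ampV H d i 1 (Vtilde H V 1) z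
    have hu : Vtilde H V i u = Vtilde H V (i + 1) z := DFunLike.congr_fun (Vtilde_comp_ampV V i 1) z
    rw [ContinuousLinearMap.coe_coe, ← hu]
    have hfix : Vtilde H V i (Siter H S i (Vtilde H V i u)) = Vtilde H V i u := ih ⟨u, rfl⟩
    have hrange (α : Word d i) :
        Siter H S i (Vtilde H V i u) α ∈ LinearMap.range (Vtilde H V 1).toLinearMap := by
      have hker := reg.apply_mem_range_of_Vtilde_eq_zero 1
        (x := Siter H S i (Vtilde H V i u) - u) (by rw [map_sub, hfix, sub_self]) α
      have hu : u α ∈ LinearMap.range (Vtilde H V 1).toLinearMap :=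
        ⟨blockIn H d i 1 α z, (ampV_apply i 1 _ z α).symm⟩
      simpa using add_mem hker hu
    have hQ : ampHH H d i ((Vtilde H V 1).comp S) (Siter H S i (Vtilde H V i u)) =
        Siter H S i (Vtilde H V i u) := by
      ext α
      rw [ampHH_apply]
      exact apply_apply_of_mem_range hTST (hrange α)
    calc Vtilde H V (i + 1) (Siter H S (i + 1) (Vtilde H V i u))
        = Vtilde H V i (ampHH H d i ((Vtilde H V 1).comp S) (Siter H S i (Vtilde H V i u))) :=
          DFunLike.congr_fun (Vtilde_comp_Siter_succ i) _
      _ = Vtilde H V i u := by rw [hQ, hfix]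

lemma Vtilde_ampS_Siter_eq_zero
    (hTST : (Vtilde H V 1).comp (S.comp (Vtilde H V 1)) = Vtilde H V 1)
    (reg : RepRegular H V) (a i : ℕ) {ξ : Hn H d (a + 1)}
    (hξ : ξ ∈ odotSub H d a (LinearMap.ker (Vtilde H V 1).toLinearMap)) :
    Vtilde H V (a + 1 + i) (ampS H d (a + 1) i (Siter H S i) ξ) = 0 := by
  have hfix : ampHH H d (a + 1) ((Vtilde H V i).comp (Siter H S i)) ξ = ξ := by
    ext β
    rw [ampHH_apply, ContinuousLinearMap.comp_apply]
    refine Vtilde_Siter_of_mem_range hTST reg i ?_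
    have hβ : ξ β =
        blockIn H d a 1 (fun j => β (Fin.castAdd 1 j)) ξ (fun j => β (Fin.natAdd a j)) := by
      rw [blockIn_apply, Fin.append_castAdd_natAdd]
    rw [hβ]
    exact reg.apply_mem_range_of_Vtilde_eq_zero i (mem_odotSub.1 hξ _) _
  have hblocks : ampV H d a 1 (Vtilde H V 1) ξ = 0 := by
    ext α
    rw [ampV_apply]
    exact mem_odotSub.1 hξ α
  calc Vtilde H V (a + 1 + i) (ampS H d (a + 1) i (Siter H S i) ξ)
      = Vtilde H V (a + 1)
          (ampV H d (a + 1) i (Vtilde H V i) (ampS H d (a + 1) i (Siter H S i) ξ)) :=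
        (DFunLike.congr_fun (Vtilde_comp_ampV V (a + 1) i) _).symm
    _ = Vtilde H V (a + 1) ξ := by
        rw [← ContinuousLinearMap.comp_apply (ampV H d (a + 1) i _), ampV_comp_ampS, hfix]
    _ = Vtilde H V a (ampV H d a 1 (Vtilde H V 1) ξ) :=
        (DFunLike.congr_fun (Vtilde_comp_ampV V a 1) ξ).symm
    _ = 0 := by rw [hblocks, map_zero]

lemma ampSiter_eq {n a i : ℕ} (hi : i < n) (h : a + 1 + i = n) (ξ : Hn H d (n - i - 1 + 1)) :
    ampSiter S n ⟨i, hi⟩ ξ =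
      castHn H d h (ampS H d (a + 1) i (Siter H S i) (castHn H d (by omega) ξ)) := by
  obtain rfl : a = n - i - 1 := by omega
  simp only [ampSiter, ContinuousLinearMap.comp_apply, ampS_castHn, castHn_castHn]

lemma ampSiter_zero (n : ℕ) (x : Hn H d (n + 1)) :
    ampSiter S (n + 1) ⟨0, n.succ_pos⟩ x = x := by
  rw [ampSiter_eq (n := n + 1) (a := n) (i := 0) _ rfl]
  ext β
  simp [castHn_apply, ampS_apply, Siter_zero_apply]

lemma ampS_ampSiter {n i : ℕ} (hi : i < n) (ξ : Hn H d (n - i - 1 + 1)) :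
    ampS H d n 1 S (ampSiter S n ⟨i, hi⟩ ξ) =
      ampSiter S (n + 1) ⟨i + 1, by omega⟩
        (castHn H d (by omega : n - i - 1 + 1 = n + 1 - (i + 1) - 1 + 1) ξ) := by
  rw [ampSiter_eq hi (a := n - i - 1) (by omega), ampSiter_eq (a := n - i - 1) _ (by omega),
    ampS_castHn, ← ContinuousLinearMap.comp_apply (ampS H d _ 1 S), ampS_comp_ampS, castHn_castHn]
  rfl

lemma map_ampS_kerSpan_le (n : ℕ) :
    (kerSpan V S n).map (ampS H d n 1 S).toLinearMap ≤ kerSpan V S (n + 1) := by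
  rw [kerSpan, Submodule.map_iSup]
  refine iSup_le fun ⟨i, hi⟩ => ?_
  rintro _ ⟨_, ⟨ξ, hξ, rfl⟩, rfl⟩
  exact Submodule.mem_iSup_of_mem ⟨i + 1, by omega⟩
    ⟨_, castHn_mem_odotSub (by omega : n - i - 1 + 1 = n + 1 - (i + 1) - 1 + 1) hξ,
      (ampS_ampSiter hi ξ).symm⟩

lemma sub_ampS_ampV_mem_odotSub
    (hTST : (Vtilde H V 1).comp (S.comp (Vtilde H V 1)) = Vtilde H V 1)
    (n : ℕ) (x : Hn H d (n + 1)) :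
    x - ampS H d n 1 S (ampV H d n 1 (Vtilde H V 1) x) ∈
      odotSub H d n (LinearMap.ker (Vtilde H V 1).toLinearMap) := by
  refine mem_odotSub.2 fun α => ?_
  rw [LinearMap.mem_ker, map_sub, blockIn_ampS, ampV_apply, ContinuousLinearMap.coe_coe, map_sub,
    apply_apply_of_mem_range hTST (y := Vtilde H V 1 (blockIn H d n 1 α x)) ⟨_, rfl⟩, sub_self]

lemma ker_Vtilde_le_kerSpan
    (hTST : (Vtilde H V 1).comp (S.comp (Vtilde H V 1)) = Vtilde H V 1) (n : ℕ) :
    LinearMap.ker (Vtilde H V n).toLinearMap ≤ kerSpan V S n := by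
  induction n with
  | zero =>
    intro x (hx : Vtilde H V 0 x = 0)
    obtain rfl : x = 0 := by
      ext α
      rw [← Vtilde_zero_apply V x α, hx]
      rfl
    exact zero_mem _
  | succ n ih =>
    intro x (hx : Vtilde H V (n + 1) x = 0)
    set y := ampV H d n 1 (Vtilde H V 1) x
    have hy : Vtilde H V n y = 0 := by
      rw [← hx]
      exact DFunLike.congr_fun (Vtilde_comp_ampV V n 1) x
    rw [← sub_add_cancel x (ampS H d n 1 S y)]
    exact add_mem
      (Submodule.mem_iSup_of_mem ⟨0, n.succ_pos⟩
        ⟨_, sub_ampS_ampV_mem_odotSub hTST n x, ampSiter_zero n _⟩)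
      (map_ampS_kerSpan_le n ⟨y, ih hy, rfl⟩)

lemma kerSpan_le_ker
    (hTST : (Vtilde H V 1).comp (S.comp (Vtilde H V 1)) = Vtilde H V 1)
    (reg : RepRegular H V) (n : ℕ) :
    kerSpan V S n ≤ LinearMap.ker (Vtilde H V n).toLinearMap := by
  refine iSup_le fun ⟨i, hi⟩ => ?_
  rintro _ ⟨ξ, hξ, rfl⟩
  show Vtilde H V n (ampSiter S n ⟨i, hi⟩ ξ) = 0
  rw [ampSiter_eq hi (a := n - i - 1) (by omega), Vtilde_castHn]
  exact Vtilde_ampS_Siter_eq_zero hTST reg _ i (castHn_mem_odotSub _ hξ)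

end KernelOfVtilde

theorem stmt_15 (H : Type) [NormedAddCommGroup H] [InnerProductSpace ℂ H] [CompleteSpace H]
    (d : ℕ) (V : Fin d → H →L[ℂ] H)
    (Vdag : H →L[ℂ] Hn H d 1)
    (mp1 : (Vtilde H V 1).comp (Vdag.comp (Vtilde H V 1)) = Vtilde H V 1)
    (mp3 : IsSelfAdjoint ((Vtilde H V 1).comp Vdag))
    (n : ℕ) :
    (LinearMap.ker (Siter H Vdag n).toLinearMap ≤
      (⨆ i ∈ Finset.range n,
        Submodule.map (Vtilde H V i).toLinearMap
          (HnSub H d i ((LinearMap.range (Vtilde H V 1).toLinearMap)ᗮ))).topologicalClosure) ∧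
    (RepRegular H V →
      LinearMap.ker (Vtilde H V n).toLinearMap =
        (⨆ i : Fin n,
          Submodule.map
            ((castHn H d (Nat.sub_add_cancel i.isLt.le)).comp
              ((ampS H d (n - (i : ℕ)) (i : ℕ) (Siter H Vdag (i : ℕ))).comp
                (castHn H d
                  (by have := i.isLt; omega : (n - (i : ℕ) - 1) + 1 = n - (i : ℕ))))).toLinearMap
            (odotSub H d (n - (i : ℕ) - 1)
              (LinearMap.ker (Vtilde H V 1).toLinearMap))).topologicalClosure) := by
  refine ⟨(ker_Siter_le_iSup mp1 mp3 n).trans (Submodule.le_topologicalClosure _),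
    fun reg => ?_⟩
  exact le_antisymm ((ker_Vtilde_le_kerSpan mp1 n).trans (Submodule.le_topologicalClosure _))
    (Submodule.topologicalClosure_minimal _ (kerSpan_le_ker mp1 reg n)
      (ContinuousLinearMap.isClosed_ker _))
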